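/- Define g_P(y) := −(2/M^LP) ∫₀¹ ⟨φ, T_{−sy}(y·∇)³(P·∇)φ⟩ ds. Then for all y, P ∈ ℝ³: |g_P(y)| ≤ (3‖Δφ‖² / ‖∇φ‖²) |P| |y|³. -/

import Mathlib

open MeasureTheory
open scoped RealInnerProductSpace

noncomputable section

namespace PolaronStmt9

variable (φ : EuclideanSpace ℝ (Fin 3) → ℝ)

/-- The Landau–Pekar constant `M^LP := (2/3)‖∇φ‖²`. -/
def MLP : ℝ := (2 / 3) * ∫ x, ‖gradient φ x‖ ^ 2

/-- The fourth-order directional derivative `(y·∇)³(P·∇)φ`. -/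
def D4 (y P : EuclideanSpace ℝ (Fin 3)) :
    EuclideanSpace ℝ (Fin 3) → ℝ :=
  fun x => fderiv ℝ
    (fun z => fderiv ℝ
      (fun w => fderiv ℝ (fun t => fderiv ℝ φ t P) w y) z y) x y

/-- `g_P(y) := −(2/M^LP) ∫₀¹ ⟨φ, T_{−sy}(y·∇)³(P·∇)φ⟩ ds`. -/
def gP (P y : EuclideanSpace ℝ (Fin 3)) : ℝ :=
  -(2 / MLP φ) * ∫ s in (0 : ℝ)..1, ∫ x, φ x * D4 φ y P (x - s • y)

/-- The Laplacian `Δφ = ∑ᵢ ∂ᵢ²φ`. -/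
def lap : EuclideanSpace ℝ (Fin 3) → ℝ :=
  fun x => ∑ i : Fin 3,
    fderiv ℝ (fun z => fderiv ℝ φ z (EuclideanSpace.single i (1 : ℝ))) x
      (EuclideanSpace.single i (1 : ℝ))


abbrev E3 : Type := EuclideanSpace ℝ (Fin 3)

/-- directional derivative -/
def Dv (v : E3) (f : E3 → ℝ) : E3 → ℝ := fun x => fderiv ℝ f x v

/-- nested directional derivatives -/
def ND : (k : ℕ) → (Fin k → E3) → (E3 → ℝ) → E3 → ℝ
  | 0, _, f => f
  | (k+1), vs, f => Dv (vs 0) (ND k (Fin.tail vs) f)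

variable {f g : E3 → ℝ}

lemma contDiff_Dv (hf : ContDiff ℝ (⊤ : ℕ∞) f) (v : E3) : ContDiff ℝ (⊤ : ℕ∞) (Dv v f) :=
  (hf.fderiv_right (by simp)).clm_apply contDiff_const

lemma contDiff_ND (hf : ContDiff ℝ (⊤ : ℕ∞) f) : ∀ (k : ℕ) (vs : Fin k → E3),
    ContDiff ℝ (⊤ : ℕ∞) (ND k vs f)
  | 0, _ => hf
  | (k+1), vs => contDiff_Dv (contDiff_ND hf k (Fin.tail vs)) (vs 0)

lemma ND_eq (hf : ContDiff ℝ (⊤ : ℕ∞) f) : ∀ (k : ℕ) (vs : Fin k → E3) (x : E3),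
    ND k vs f x = iteratedFDeriv ℝ k f x vs
  | 0, vs, x => by simp [ND, iteratedFDeriv_zero_apply]
  | (k+1), vs, x => by
    have hdiff : DifferentiableAt ℝ (iteratedFDeriv ℝ k f) x :=
      (hf.differentiable_iteratedFDeriv (by exact_mod_cast WithTop.coe_lt_top k)) x
    have h1 : ND k (Fin.tail vs) f = fun z => iteratedFDeriv ℝ k f z (Fin.tail vs) :=
      funext fun z => ND_eq hf k (Fin.tail vs) z
    show fderiv ℝ (ND k (Fin.tail vs) f) x (vs 0) = _
    rw [h1, fderiv_continuousMultilinear_apply_const_apply hdiff,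
      iteratedFDeriv_succ_apply_left]

lemma abs_ND_le (hf : ContDiff ℝ (⊤ : ℕ∞) f) (k : ℕ) (vs : Fin k → E3) (x : E3) :
    |ND k vs f x| ≤ (∏ i, ‖vs i‖) * ‖iteratedFDeriv ℝ k f x‖ := by
  rw [ND_eq hf]
  calc |iteratedFDeriv ℝ k f x vs| ≤ ‖iteratedFDeriv ℝ k f x‖ * ∏ i, ‖vs i‖ :=
        (iteratedFDeriv ℝ k f x).le_opNorm vs
  _ = _ := mul_comm _ _

lemma integrable_mul_L2 (hf : MemLp f 2 (volume : Measure E3))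
    (hg : MemLp g 2 (volume : Measure E3)) :
    Integrable (fun x => f x * g x) (volume : Measure E3) := by
  have : MemLp (f • g) 1 (volume : Measure E3) :=
    hg.smul hf
  exact memLp_one_iff_integrable.mp this


lemma measurePreserving_sub (c : E3) :
    MeasurePreserving (fun x => x - c) (volume : Measure E3) volume := by
  have := measurePreserving_add_right (volume : Measure E3) (-c)
  simpa [sub_eq_add_neg] using this

lemma memL2_comp_sub (hg : MemLp g 2 (volume : Measure E3)) (c : E3) :
    MemLp (fun x => g (x - c)) 2 (volume : Measure E3) :=
  hg.comp_measurePreserving (measurePreserving_sub c)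

lemma integral_comp_sub (g : E3 → ℝ) (c : E3) :
    ∫ x, g (x - c) = ∫ x, g x :=
  integral_sub_right_eq_self g c

lemma differentiable_comp_sub (hg : Differentiable ℝ g) (c : E3) :
    Differentiable ℝ (fun x => g (x - c)) :=
  hg.comp (differentiable_id.sub_const c)

lemma fderiv_comp_sub (hg : Differentiable ℝ g) (c x v : E3) :
    fderiv ℝ (fun z => g (z - c)) x v = fderiv ℝ g (x - c) v := by
  have h : HasFDerivAt (fun z => g (z - c)) (fderiv ℝ g (x - c)) x := by
    have h1 : HasFDerivAt (fun z : E3 => z - c) (ContinuousLinearMap.id ℝ E3) x :=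
      (hasFDerivAt_id x).sub_const c
    have h2 := (hg (x - c)).hasFDerivAt.comp x h1
    rw [ContinuousLinearMap.comp_id] at h2
    exact h2
  rw [h.fderiv]

/-- Integration by parts wrapper. -/
lemma ibp (hf : Differentiable ℝ f) (hg : Differentiable ℝ g) (v : E3)
    (h1 : Integrable (fun x => Dv v f x * g x) (volume : Measure E3))
    (h2 : Integrable (fun x => f x * Dv v g x) (volume : Measure E3))
    (h3 : Integrable (fun x => f x * g x) (volume : Measure E3)) :
    ∫ x, f x * Dv v g x = - ∫ x, Dv v f x * g x :=
  integral_mul_fderiv_eq_neg_fderiv_mul_of_integrable h1 h2 h3 (fun x _ => hf x) (fun x _ => hg x)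

lemma clairaut (hf : ContDiff ℝ (⊤ : ℕ∞) f) (v w : E3) :
    Dv v (Dv w f) = Dv w (Dv v f) := by
  funext x
  have hd : Differentiable ℝ f := hf.differentiable (by simp)
  have h' : ContDiff ℝ (⊤ : ℕ∞) (fderiv ℝ f) := hf.fderiv_right (by simp)
  have hd' : Differentiable ℝ (fderiv ℝ f) := h'.differentiable (by simp)
  have hsym := second_derivative_symmetric (f := f) (f' := fderiv ℝ f)
    (f'' := fderiv ℝ (fderiv ℝ f) x) (fun y => (hd y).hasFDerivAt) ((hd' x).hasFDerivAt)
  have key : ∀ a b : E3, Dv a (Dv b f) x = fderiv ℝ (fderiv ℝ f) x a b := by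
    intro a b
    show fderiv ℝ (fun z => (fderiv ℝ f z) b) x a = _
    rw [fderiv_clm_apply (hd' x) (differentiableAt_const b)]
    simp
  rw [key v w, key w v, hsym v w]

abbrev e3 (i : Fin 3) : E3 := EuclideanSpace.single i (1 : ℝ)

lemma expand_fderiv (f : E3 → ℝ) (x v : E3) :
    fderiv ℝ f x v = ∑ i, v i * Dv (e3 i) f x := by
  have hv : v = ∑ i, v i • e3 i := by
    ext j
    rw [WithLp.ofLp_sum, Finset.sum_apply]
    simp [EuclideanSpace.single_apply]
  conv_lhs => rw [hv]
  rw [map_sum]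
  simp [Dv]

lemma Dv_expand (f : E3 → ℝ) (v : E3) (x : E3) :
    Dv v f x = ∑ i, v i * Dv (e3 i) f x := expand_fderiv f x v

lemma D2_expand (hf : ContDiff ℝ (⊤ : ℕ∞) f) (v w x : E3) :
    Dv v (Dv w f) x = ∑ i, ∑ j, (v i * w j) * Dv (e3 i) (Dv (e3 j) f) x := by
  have h1 : Dv w f = fun z => ∑ j, w j * Dv (e3 j) f z :=
    funext fun z => Dv_expand f w z
  have hdiff : ∀ j : Fin 3, Differentiable ℝ (Dv (e3 j) f) :=
    fun j => (contDiff_Dv hf (e3 j)).differentiable (by simp)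
  have h2 : Dv v (Dv w f) x = ∑ j, w j * Dv v (Dv (e3 j) f) x := by
    show fderiv ℝ _ x v = _
    rw [h1]
    rw [fderiv_fun_sum (fun j _ => ((hdiff j x).const_mul (w j)))]
    simp only [ContinuousLinearMap.sum_apply]
    congr 1; funext j
    rw [fderiv_const_mul (hdiff j x)]
    rfl
  rw [h2]
  rw [Finset.sum_comm]
  congr 1; funext i
  rw [Dv_expand (Dv (e3 i) f) v x, Finset.mul_sum]
  congr 1; funext j
  ring


lemma norm_sq_eq_sum (v : E3) : ‖v‖ ^ 2 = ∑ i, (v i) ^ 2 := by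
  rw [EuclideanSpace.norm_eq, Real.sq_sqrt (by positivity)]
  simp [sq_abs]

lemma D2_sq_le (hf : ContDiff ℝ (⊤ : ℕ∞) f) (v w x : E3) :
    (Dv v (Dv w f) x) ^ 2 ≤
      (‖v‖ ^ 2 * ‖w‖ ^ 2) * ∑ i, ∑ j, (Dv (e3 i) (Dv (e3 j) f) x) ^ 2 := by
  rw [D2_expand hf]
  set a : Fin 3 → Fin 3 → ℝ := fun i j => Dv (e3 i) (Dv (e3 j) f) x with ha
  calc (∑ i, ∑ j, (v i * w j) * a i j) ^ 2
      = (∑ p : Fin 3 × Fin 3, (v p.1 * w p.2) * a p.1 p.2) ^ 2 := by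
        rw [Fintype.sum_prod_type]
    _ ≤ (∑ p : Fin 3 × Fin 3, (v p.1 * w p.2) ^ 2) *
          (∑ p : Fin 3 × Fin 3, (a p.1 p.2) ^ 2) :=
        Finset.sum_mul_sq_le_sq_mul_sq _ _ _
    _ = (‖v‖ ^ 2 * ‖w‖ ^ 2) * ∑ i, ∑ j, (a i j) ^ 2 := by
        have h1 : (∑ p : Fin 3 × Fin 3, (v p.1 * w p.2) ^ 2)
            = (∑ i, (v i) ^ 2) * (∑ j, (w j) ^ 2) := by
          rw [Finset.sum_mul_sum, Fintype.sum_prod_type]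
          simp [mul_pow]
        rw [h1, norm_sq_eq_sum, norm_sq_eq_sum, Fintype.sum_prod_type]


lemma ND_one (f : E3 → ℝ) (v : E3) : ND 1 ![v] f = Dv v f := by
  show Dv (![v] 0) (ND 0 (Fin.tail ![v]) f) = Dv v f
  rfl

lemma ND_two (f : E3 → ℝ) (v w : E3) : ND 2 ![v, w] f = Dv v (Dv w f) := by
  show Dv (![v, w] 0) (ND 1 (Fin.tail ![v, w]) f) = _
  have h : Fin.tail ![v, w] = ![w] := by
    funext i; fin_cases i <;> rfl
  rw [h, ND_one]
  rfl

lemma ND_three (f : E3 → ℝ) (u v w : E3) : ND 3 ![u, v, w] f = Dv u (Dv v (Dv w f)) := by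
  show Dv (![u, v, w] 0) (ND 2 (Fin.tail ![u, v, w]) f) = _
  have h : Fin.tail ![u, v, w] = ![v, w] := by
    funext i; fin_cases i <;> rfl
  rw [h, ND_two]
  rfl

lemma ND_four (f : E3 → ℝ) (u v w z : E3) :
    ND 4 ![u, v, w, z] f = Dv u (Dv v (Dv w (Dv z f))) := by
  show Dv (![u, v, w, z] 0) (ND 3 (Fin.tail ![u, v, w, z]) f) = _
  have h : Fin.tail ![u, v, w, z] = ![v, w, z] := by
    funext i; fin_cases i <;> rfl
  rw [h, ND_three]
  rfl

section PhiL2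

variable {ψ : E3 → ℝ} (hsmooth : ContDiff ℝ (⊤ : ℕ∞) ψ)
  (hL2 : ∀ k : ℕ, k ≤ 4 → MemLp (iteratedFDeriv ℝ k ψ) 2 volume)

include hsmooth hL2

lemma memL2_ND {k : ℕ} (hk : k ≤ 4) (vs : Fin k → E3) :
    MemLp (ND k vs ψ) 2 (volume : Measure E3) :=
  (hL2 k hk).of_le_mul ((contDiff_ND hsmooth k vs).continuous.aestronglyMeasurable)
    (Filter.Eventually.of_forall fun x => by
      rw [Real.norm_eq_abs]
      exact abs_ND_le hsmooth k vs x)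

lemma memL2_0 : MemLp ψ 2 (volume : Measure E3) :=
  memL2_ND hsmooth hL2 (by norm_num) (![] : Fin 0 → E3)

lemma memL2_1 (v : E3) : MemLp (Dv v ψ) 2 (volume : Measure E3) := by
  have := memL2_ND hsmooth hL2 (by norm_num : (1:ℕ) ≤ 4) ![v]
  rwa [ND_one] at this

lemma memL2_2 (v w : E3) : MemLp (Dv v (Dv w ψ)) 2 (volume : Measure E3) := by
  have := memL2_ND hsmooth hL2 (by norm_num : (2:ℕ) ≤ 4) ![v, w]
  rwa [ND_two] at this

lemma memL2_3 (u v w : E3) : MemLp (Dv u (Dv v (Dv w ψ))) 2 (volume : Measure E3) := by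
  have := memL2_ND hsmooth hL2 (by norm_num : (3:ℕ) ≤ 4) ![u, v, w]
  rwa [ND_three] at this

lemma memL2_4 (u v w z : E3) : MemLp (Dv u (Dv v (Dv w (Dv z ψ)))) 2 (volume : Measure E3) := by
  have := memL2_ND hsmooth hL2 (by norm_num : (4:ℕ) ≤ 4) ![u, v, w, z]
  rwa [ND_four] at this

end PhiL2

/-- Cauchy–Schwarz for integrals of products of L² functions. -/
lemma L2CS (hf : MemLp f 2 (volume : Measure E3)) (hg : MemLp g 2 (volume : Measure E3)) :
    |∫ x, f x * g x| ≤ Real.sqrt (∫ x, f x ^ 2) * Real.sqrt (∫ x, g x ^ 2) := by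
  have hiFG : (inner ℝ (hf.toLp f) (hg.toLp g) : ℝ) = ∫ x, f x * g x := by
    rw [L2.inner_def]
    refine integral_congr_ae ?_
    filter_upwards [hf.coeFn_toLp, hg.coeFn_toLp] with x h1 h2
    rw [h1, h2]
    simp [RCLike.inner_apply, starRingEnd_apply, mul_comm]
  have hiFF : (inner ℝ (hf.toLp f) (hf.toLp f) : ℝ) = ∫ x, f x ^ 2 := by
    rw [L2.inner_def]
    refine integral_congr_ae ?_
    filter_upwards [hf.coeFn_toLp] with x h1
    rw [h1]
    simp [RCLike.inner_apply, starRingEnd_apply, sq]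
  have hiGG : (inner ℝ (hg.toLp g) (hg.toLp g) : ℝ) = ∫ x, g x ^ 2 := by
    rw [L2.inner_def]
    refine integral_congr_ae ?_
    filter_upwards [hg.coeFn_toLp] with x h1
    rw [h1]
    simp [RCLike.inner_apply, starRingEnd_apply, sq]
  have hnF : Real.sqrt (∫ x, f x ^ 2) = ‖hf.toLp f‖ := by
    rw [← hiFF, real_inner_self_eq_norm_sq, Real.sqrt_sq (norm_nonneg _)]
  have hnG : Real.sqrt (∫ x, g x ^ 2) = ‖hg.toLp g‖ := by
    rw [← hiGG, real_inner_self_eq_norm_sq, Real.sqrt_sq (norm_nonneg _)]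
  rw [← hiFG, hnF, hnG]
  exact abs_real_inner_le_norm _ _


lemma d_top (hf : ContDiff ℝ (⊤ : ℕ∞) f) : Differentiable ℝ f :=
  hf.differentiable (by simp)

lemma Dv_comp_sub (hg : Differentiable ℝ g) (c v : E3) :
    Dv v (fun z => g (z - c)) = fun x => Dv v g (x - c) :=
  funext fun x => fderiv_comp_sub hg c x v

section PhiMain

variable {ψ : E3 → ℝ} (hsmooth : ContDiff ℝ (⊤ : ℕ∞) ψ)
  (hL2 : ∀ k : ℕ, k ≤ 4 → MemLp (iteratedFDeriv ℝ k ψ) 2 volume)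

include hsmooth hL2

lemma J_eq (y P c : E3) :
    ∫ x, ψ x * fderiv ℝ
        (fun z => fderiv ℝ (fun w => fderiv ℝ (fun t => fderiv ℝ ψ t P) w y) z y) (x - c) y
      = ∫ x, Dv y (Dv y ψ) x * Dv y (Dv P ψ) (x - c) := by
  have dphi : Differentiable ℝ ψ := d_top hsmooth
  have c2 : ContDiff ℝ (⊤ : ℕ∞) (Dv y (Dv P ψ)) := contDiff_Dv (contDiff_Dv hsmooth P) y
  have d2 : Differentiable ℝ (Dv y (Dv P ψ)) := d_top c2
  have c3 : ContDiff ℝ (⊤ : ℕ∞) (Dv y (Dv y (Dv P ψ))) := contDiff_Dv c2 y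
  have d3 : Differentiable ℝ (Dv y (Dv y (Dv P ψ))) := d_top c3
  have d1y : Differentiable ℝ (Dv y ψ) := d_top (contDiff_Dv hsmooth y)
  have h1 : Integrable (fun x => Dv y ψ x * Dv y (Dv y (Dv P ψ)) (x - c)) volume :=
    integrable_mul_L2 (memL2_1 hsmooth hL2 y) (memL2_comp_sub (memL2_3 hsmooth hL2 y y P) c)
  have h2 : Integrable (fun x => ψ x * Dv y (fun z => Dv y (Dv y (Dv P ψ)) (z - c)) x) volume := by
    rw [Dv_comp_sub d3]
    exact integrable_mul_L2 (memL2_0 hsmooth hL2)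
      (memL2_comp_sub (memL2_4 hsmooth hL2 y y y P) c)
  have h3 : Integrable (fun x => ψ x * Dv y (Dv y (Dv P ψ)) (x - c)) volume :=
    integrable_mul_L2 (memL2_0 hsmooth hL2) (memL2_comp_sub (memL2_3 hsmooth hL2 y y P) c)
  have step1 : ∫ x, ψ x * fderiv ℝ
        (fun z => fderiv ℝ (fun w => fderiv ℝ (fun t => fderiv ℝ ψ t P) w y) z y) (x - c) y
      = - ∫ x, Dv y ψ x * Dv y (Dv y (Dv P ψ)) (x - c) := by
    have e1 : (fun x : E3 => ψ x * fderiv ℝ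
        (fun z => fderiv ℝ (fun w => fderiv ℝ (fun t => fderiv ℝ ψ t P) w y) z y) (x - c) y)
        = fun x => ψ x * Dv y (fun z => Dv y (Dv y (Dv P ψ)) (z - c)) x := by
      rw [Dv_comp_sub d3]
      rfl
    rw [e1]
    exact ibp dphi (differentiable_comp_sub d3 c) y h1 h2 h3
  have h1' : Integrable (fun x => Dv y (Dv y ψ) x * Dv y (Dv P ψ) (x - c)) volume :=
    integrable_mul_L2 (memL2_2 hsmooth hL2 y y) (memL2_comp_sub (memL2_2 hsmooth hL2 y P) c)
  have h2' : Integrable (fun x => Dv y ψ x * Dv y (fun z => Dv y (Dv P ψ) (z - c)) x) volume := by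
    rw [Dv_comp_sub d2]
    exact integrable_mul_L2 (memL2_1 hsmooth hL2 y)
      (memL2_comp_sub (memL2_3 hsmooth hL2 y y P) c)
  have h3' : Integrable (fun x => Dv y ψ x * Dv y (Dv P ψ) (x - c)) volume :=
    integrable_mul_L2 (memL2_1 hsmooth hL2 y) (memL2_comp_sub (memL2_2 hsmooth hL2 y P) c)
  have step2 : ∫ x, Dv y ψ x * Dv y (Dv y (Dv P ψ)) (x - c)
      = - ∫ x, Dv y (Dv y ψ) x * Dv y (Dv P ψ) (x - c) := by
    have e2 : (fun x => Dv y ψ x * Dv y (Dv y (Dv P ψ)) (x - c))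
        = fun x => Dv y ψ x * Dv y (fun z => Dv y (Dv P ψ) (z - c)) x := by
      rw [Dv_comp_sub d2]
    rw [e2]
    exact ibp d1y (differentiable_comp_sub d2 c) y h1' h2' h3'
  rw [step1, step2, neg_neg]

lemma int_sq (v w : E3) :
    Integrable (fun x => (Dv v (Dv w ψ) x) ^ 2) (volume : Measure E3) := by
  simpa [sq] using integrable_mul_L2 (memL2_2 hsmooth hL2 v w) (memL2_2 hsmooth hL2 v w)

lemma int_sq_le (v w : E3) :
    ∫ x, (Dv v (Dv w ψ) x) ^ 2
      ≤ (‖v‖ ^ 2 * ‖w‖ ^ 2) * ∑ i, ∑ j, ∫ x, (Dv (e3 i) (Dv (e3 j) ψ) x) ^ 2 := by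
  have hFrInt : Integrable (fun x => ∑ i, ∑ j, (Dv (e3 i) (Dv (e3 j) ψ) x) ^ 2) volume :=
    integrable_finset_sum _ fun i _ => integrable_finset_sum _ fun j _ => int_sq hsmooth hL2 _ _
  have hmono : ∫ x, (Dv v (Dv w ψ) x) ^ 2
      ≤ ∫ x, (‖v‖ ^ 2 * ‖w‖ ^ 2) * ∑ i, ∑ j, (Dv (e3 i) (Dv (e3 j) ψ) x) ^ 2 :=
    integral_mono (int_sq hsmooth hL2 v w) (hFrInt.const_mul _) (fun x => D2_sq_le hsmooth v w x)
  refine hmono.trans_eq ?_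
  rw [integral_const_mul]
  congr 1
  rw [integral_finset_sum _ fun i _ => integrable_finset_sum _ fun j _ => int_sq hsmooth hL2 _ _]
  exact Finset.sum_congr rfl fun i _ =>
    integral_finset_sum _ fun j _ => int_sq hsmooth hL2 _ _

lemma J_bound (y P c : E3) :
    |∫ x, ψ x * fderiv ℝ
        (fun z => fderiv ℝ (fun w => fderiv ℝ (fun t => fderiv ℝ ψ t P) w y) z y) (x - c) y|
      ≤ ‖y‖ ^ 3 * ‖P‖ * ∑ i, ∑ j, ∫ x, (Dv (e3 i) (Dv (e3 j) ψ) x) ^ 2 := by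
  set S : ℝ := ∑ i, ∑ j, ∫ x, (Dv (e3 i) (Dv (e3 j) ψ) x) ^ 2 with hSdef
  have hSnn : 0 ≤ S :=
    Finset.sum_nonneg fun i _ => Finset.sum_nonneg fun j _ =>
      integral_nonneg fun x => sq_nonneg _
  rw [J_eq hsmooth hL2 y P c]
  have hCS := L2CS (memL2_2 hsmooth hL2 y y)
    (memL2_comp_sub (memL2_2 hsmooth hL2 y P) c)
  have htrans : ∫ x, (Dv y (Dv P ψ) (x - c)) ^ 2 = ∫ x, (Dv y (Dv P ψ) x) ^ 2 :=
    integral_comp_sub (fun x => (Dv y (Dv P ψ) x) ^ 2) c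
  have hb1 : Real.sqrt (∫ x, (Dv y (Dv y ψ) x) ^ 2) ≤ ‖y‖ ^ 2 * Real.sqrt S := by
    have h := Real.sqrt_le_sqrt (int_sq_le hsmooth hL2 y y)
    refine h.trans_eq ?_
    rw [Real.sqrt_mul (by positivity), show ‖y‖ ^ 2 * ‖y‖ ^ 2 = (‖y‖ ^ 2) ^ 2 by ring,
      Real.sqrt_sq (by positivity)]
  have hb2 : Real.sqrt (∫ x, (Dv y (Dv P ψ) x) ^ 2) ≤ (‖y‖ * ‖P‖) * Real.sqrt S := by
    have h := Real.sqrt_le_sqrt (int_sq_le hsmooth hL2 y P)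
    refine h.trans_eq ?_
    rw [Real.sqrt_mul (by positivity), show ‖y‖ ^ 2 * ‖P‖ ^ 2 = (‖y‖ * ‖P‖) ^ 2 by ring,
      Real.sqrt_sq (by positivity)]
  calc |∫ x, Dv y (Dv y ψ) x * Dv y (Dv P ψ) (x - c)|
      ≤ Real.sqrt (∫ x, (Dv y (Dv y ψ) x) ^ 2) *
          Real.sqrt (∫ x, (Dv y (Dv P ψ) (x - c)) ^ 2) := hCS
    _ = Real.sqrt (∫ x, (Dv y (Dv y ψ) x) ^ 2) *
          Real.sqrt (∫ x, (Dv y (Dv P ψ) x) ^ 2) := by rw [htrans]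
    _ ≤ (‖y‖ ^ 2 * Real.sqrt S) * ((‖y‖ * ‖P‖) * Real.sqrt S) :=
        mul_le_mul hb1 hb2 (Real.sqrt_nonneg _) (by positivity)
    _ = ‖y‖ ^ 3 * ‖P‖ * (Real.sqrt S * Real.sqrt S) := by ring
    _ = ‖y‖ ^ 3 * ‖P‖ * S := by rw [Real.mul_self_sqrt hSnn]

end PhiMain


/-- The Laplacian `Δψ = ∑ᵢ ∂ᵢ²ψ` (copy of the pinned definition, for aux use). -/
def lapAux (ψ : E3 → ℝ) : E3 → ℝ :=
  fun x => ∑ i : Fin 3, Dv (e3 i) (Dv (e3 i) ψ) x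

section PhiS

variable {ψ : E3 → ℝ} (hsmooth : ContDiff ℝ (⊤ : ℕ∞) ψ)
  (hL2 : ∀ k : ℕ, k ≤ 4 → MemLp (iteratedFDeriv ℝ k ψ) 2 volume)

include hsmooth hL2

lemma pair_eq (i j : Fin 3) :
    ∫ x, (Dv (e3 i) (Dv (e3 j) ψ) x) ^ 2
      = ∫ x, Dv (e3 i) (Dv (e3 i) ψ) x * Dv (e3 j) (Dv (e3 j) ψ) x := by
  have cdj : ContDiff ℝ (⊤ : ℕ∞) (Dv (e3 j) ψ) := contDiff_Dv hsmooth (e3 j)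
  have cdij : ContDiff ℝ (⊤ : ℕ∞) (Dv (e3 i) (Dv (e3 j) ψ)) := contDiff_Dv cdj (e3 i)
  have cdii : ContDiff ℝ (⊤ : ℕ∞) (Dv (e3 i) (Dv (e3 i) ψ)) :=
    contDiff_Dv (contDiff_Dv hsmooth (e3 i)) (e3 i)
  have h1 : ∫ x, Dv (e3 i) (Dv (e3 j) ψ) x * Dv (e3 i) (Dv (e3 j) ψ) x
      = - ∫ x, Dv (e3 i) (Dv (e3 i) (Dv (e3 j) ψ)) x * Dv (e3 j) ψ x :=
    ibp (d_top cdij) (d_top cdj) (e3 i)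
      (integrable_mul_L2 (memL2_3 hsmooth hL2 _ _ _) (memL2_1 hsmooth hL2 _))
      (integrable_mul_L2 (memL2_2 hsmooth hL2 _ _) (memL2_2 hsmooth hL2 _ _))
      (integrable_mul_L2 (memL2_2 hsmooth hL2 _ _) (memL2_1 hsmooth hL2 _))
  have h2 : ∫ x, Dv (e3 i) (Dv (e3 i) ψ) x * Dv (e3 j) (Dv (e3 j) ψ) x
      = - ∫ x, Dv (e3 j) (Dv (e3 i) (Dv (e3 i) ψ)) x * Dv (e3 j) ψ x :=
    ibp (d_top cdii) (d_top (contDiff_Dv hsmooth (e3 j))) (e3 j)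
      (integrable_mul_L2 (memL2_3 hsmooth hL2 _ _ _) (memL2_1 hsmooth hL2 _))
      (integrable_mul_L2 (memL2_2 hsmooth hL2 _ _) (memL2_2 hsmooth hL2 _ _))
      (integrable_mul_L2 (memL2_2 hsmooth hL2 _ _) (memL2_1 hsmooth hL2 _))
  have comm : Dv (e3 i) (Dv (e3 i) (Dv (e3 j) ψ)) = Dv (e3 j) (Dv (e3 i) (Dv (e3 i) ψ)) := by
    have hc1 : Dv (e3 i) (Dv (e3 j) ψ) = Dv (e3 j) (Dv (e3 i) ψ) := clairaut hsmooth _ _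
    calc Dv (e3 i) (Dv (e3 i) (Dv (e3 j) ψ))
        = Dv (e3 i) (Dv (e3 j) (Dv (e3 i) ψ)) := by rw [hc1]
      _ = Dv (e3 j) (Dv (e3 i) (Dv (e3 i) ψ)) := clairaut (contDiff_Dv hsmooth (e3 i)) _ _
  have h1' : ∫ x, (Dv (e3 i) (Dv (e3 j) ψ) x) ^ 2
      = - ∫ x, Dv (e3 i) (Dv (e3 i) (Dv (e3 j) ψ)) x * Dv (e3 j) ψ x := by
    rw [← h1]
    simp [sq]
  rw [h1', comm, ← h2]

lemma S_eq :
    (∑ i, ∑ j, ∫ x, (Dv (e3 i) (Dv (e3 j) ψ) x) ^ 2) = ∫ x, lapAux ψ x ^ 2 := by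
  have hint : ∀ i j : Fin 3,
      Integrable (fun x => Dv (e3 i) (Dv (e3 i) ψ) x * Dv (e3 j) (Dv (e3 j) ψ) x) volume :=
    fun i j => integrable_mul_L2 (memL2_2 hsmooth hL2 _ _) (memL2_2 hsmooth hL2 _ _)
  calc (∑ i, ∑ j, ∫ x, (Dv (e3 i) (Dv (e3 j) ψ) x) ^ 2)
      = ∑ i, ∑ j, ∫ x, Dv (e3 i) (Dv (e3 i) ψ) x * Dv (e3 j) (Dv (e3 j) ψ) x :=
        Finset.sum_congr rfl fun i _ => Finset.sum_congr rfl fun j _ => pair_eq hsmooth hL2 i j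
    _ = ∑ i, ∫ x, ∑ j, Dv (e3 i) (Dv (e3 i) ψ) x * Dv (e3 j) (Dv (e3 j) ψ) x :=
        Finset.sum_congr rfl fun i _ => (integral_finset_sum _ fun j _ => hint i j).symm
    _ = ∫ x, ∑ i, ∑ j, Dv (e3 i) (Dv (e3 i) ψ) x * Dv (e3 j) (Dv (e3 j) ψ) x :=
        (integral_finset_sum _ fun i _ => integrable_finset_sum _ fun j _ => hint i j).symm
    _ = ∫ x, lapAux ψ x ^ 2 := by
        congr 1
        funext x
        rw [lapAux, sq, Finset.sum_mul_sum]

end PhiS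

section PhiG

variable {ψ : E3 → ℝ} (hsmooth : ContDiff ℝ (⊤ : ℕ∞) ψ)
  (hL2 : ∀ k : ℕ, k ≤ 4 → MemLp (iteratedFDeriv ℝ k ψ) 2 volume)

lemma grad_norm (x : E3) : ‖gradient ψ x‖ = ‖fderiv ℝ ψ x‖ := by
  rw [gradient]
  exact LinearIsometryEquiv.norm_map _ _

lemma norm_iFD1 (x : E3) : ‖iteratedFDeriv ℝ 1 ψ x‖ = ‖fderiv ℝ ψ x‖ := by
  rw [← norm_iteratedFDeriv_fderiv (n := 0), norm_iteratedFDeriv_zero]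

include hL2 in
lemma G_integrable : Integrable (fun x => ‖gradient ψ x‖ ^ 2) (volume : Measure E3) := by
  have h1 : MemLp (fun x => ‖iteratedFDeriv ℝ 1 ψ x‖) 2 (volume : Measure E3) :=
    (hL2 1 (by norm_num)).norm
  have h2 := integrable_mul_L2 h1 h1
  refine h2.congr (Filter.Eventually.of_forall fun x => ?_)
  show ‖iteratedFDeriv ℝ 1 ψ x‖ * ‖iteratedFDeriv ℝ 1 ψ x‖ = ‖gradient ψ x‖ ^ 2
  rw [norm_iFD1, ← grad_norm, sq]

include hsmooth hL2 in
lemma G_pos (hgrad : ∃ x, gradient ψ x ≠ 0) : 0 < ∫ x, ‖gradient ψ x‖ ^ 2 := by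
  obtain ⟨x₀, hx₀⟩ := hgrad
  have hcont : Continuous fun x => ‖gradient ψ x‖ ^ 2 := by
    have h1 : Continuous (fderiv ℝ ψ) := hsmooth.continuous_fderiv (by simp)
    have h2 : Continuous fun x => gradient ψ x :=
      (InnerProductSpace.toDual ℝ E3).symm.continuous.comp h1
    exact (h2.norm).pow 2
  refine (integral_pos_iff_support_of_nonneg (fun x => by positivity)
    (G_integrable hL2)).mpr ?_
  have hopen : IsOpen (Function.support fun x => ‖gradient ψ x‖ ^ 2) :=
    hcont.isOpen_support
  refine hopen.measure_pos volume ⟨x₀, ?_⟩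
  simp only [Function.mem_support]
  exact pow_ne_zero _ (norm_ne_zero_iff.mpr hx₀)
end PhiG

/-- For all `y, P ∈ ℝ³`:
`|g_P(y)| ≤ (3‖Δφ‖² / ‖∇φ‖²) |P| |y|³`. -/
theorem abs_gP_le (hsmooth : ContDiff ℝ (⊤ : ℕ∞) φ)
    (hradial : ∀ x y : EuclideanSpace ℝ (Fin 3), ‖x‖ = ‖y‖ → φ x = φ y)
    (hL2 : ∀ k : ℕ, k ≤ 4 → MemLp (iteratedFDeriv ℝ k φ) 2 volume)
    (hgrad : ∃ x, gradient φ x ≠ 0)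
    (y P : EuclideanSpace ℝ (Fin 3)) :
    |gP φ P y| ≤
      3 * (∫ x, lap φ x ^ 2) / (∫ x, ‖gradient φ x‖ ^ 2) * ‖P‖ * ‖y‖ ^ 3 := by
  have hGpos : 0 < ∫ x, ‖gradient φ x‖ ^ 2 := G_pos hsmooth hL2 hgrad
  set G : ℝ := ∫ x, ‖gradient φ x‖ ^ 2 with hGdef
  have hGne : G ≠ 0 := ne_of_gt hGpos
  have hlap : lap φ = lapAux φ := rfl
  have hS : (∑ i, ∑ j, ∫ x, (Dv (e3 i) (Dv (e3 j) φ) x) ^ 2) = ∫ x, lap φ x ^ 2 := by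
    rw [hlap]
    exact S_eq hsmooth hL2
  set S : ℝ := ∫ x, lap φ x ^ 2 with hSdef
  have hSnn : 0 ≤ S := by
    rw [← hS]
    exact Finset.sum_nonneg fun i _ => Finset.sum_nonneg fun j _ =>
      integral_nonneg fun x => sq_nonneg _
  have hIb : |∫ s in (0:ℝ)..1, ∫ x, φ x * D4 φ y P (x - s • y)| ≤ ‖y‖ ^ 3 * ‖P‖ * S := by
    have h := intervalIntegral.norm_integral_le_of_norm_le_const (a := (0:ℝ)) (b := 1)
      (C := ‖y‖ ^ 3 * ‖P‖ * S) (f := fun s => ∫ x, φ x * D4 φ y P (x - s • y)) ?_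
    · simpa using h
    · intro s _
      rw [Real.norm_eq_abs]
      have h2 := J_bound hsmooth hL2 y P (s • y)
      rw [hS] at h2
      exact h2
  have hgP : gP φ P y
      = -(2 / ((2/3) * G)) * ∫ s in (0:ℝ)..1, ∫ x, φ x * D4 φ y P (x - s • y) := rfl
  calc |gP φ P y|
      = (2 / ((2/3) * G)) * |∫ s in (0:ℝ)..1, ∫ x, φ x * D4 φ y P (x - s • y)| := by
        rw [hgP, abs_mul, abs_neg, abs_of_pos (by positivity)]
    _ ≤ (2 / ((2/3) * G)) * (‖y‖ ^ 3 * ‖P‖ * S) :=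
        mul_le_mul_of_nonneg_left hIb (by positivity)
    _ = 3 * S / G * ‖P‖ * ‖y‖ ^ 3 := by
        field_simp

end PolaronStmt9
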